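/- arXiv:2001.06162 — 4 statements merged into one kernel-verified Lean document; each statement's English description precedes it below -/
import Mathlib

section
/- There is no permutation a₁, …, a₇ of {1, 2, …, 7} such that the weights w(1) = a₁ + a₂, w(5) = a₄ + a₅ + a₆ equal a common value x, the weights w(3) = a₂ + a₃ + a₄, w(7) = a₆ + a₇ equal a common value y, and x ≠ y. -/
/-!
The values sum to 28, and after fixing a₄ and a₆ the two weight equations are linear constraints
on distinct values in [1, 7] that admit no solution with x ≠ y.
-/

/-- Weight of position `i` (1-based) in a sequence of length `m` given by `a`:
the sum of `a i` and its existing neighbors. -/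
def seqWeight (m : Nat) (a : Nat → Nat) (i : Nat) : Nat :=
  (if 2 ≤ i then a (i-1) else 0) + a i + (if i + 1 ≤ m then a (i+1) else 0)

theorem List.map_perm_of_bijOn {α β : Type*} {f : α → β} {l : List α} {l' : List β}
    (hl : l.Nodup) (hl' : l'.Nodup) (hf : Set.BijOn f {x | x ∈ l} {y | y ∈ l'}) :
    (l.map f).Perm l' := by
  refine (perm_ext_iff_of_nodup (hl.map_on fun x hx y hy => (hf.injOn hx hy ·)) hl').mpr
    fun y => ⟨?_, fun hy => ?_⟩
  · rw [mem_map]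
    rintro ⟨x, hx, rfl⟩
    exact hf.mapsTo hx
  · obtain ⟨x, hx, rfl⟩ := hf.surjOn hy
    exact mem_map_of_mem hx

theorem common_weight_eq_of_perm {a₁ a₂ a₃ a₄ a₅ a₆ a₇ : ℕ}
    (hperm : [a₁, a₂, a₃, a₄, a₅, a₆, a₇].Perm [1, 2, 3, 4, 5, 6, 7])
    (hx : a₁ + a₂ = a₄ + a₅ + a₆) (hy : a₂ + a₃ + a₄ = a₆ + a₇) : a₁ + a₂ = a₆ + a₇ := by
  have hsum : a₁ + a₂ + a₃ + a₄ + a₅ + a₆ + a₇ = 28 := by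
    simpa [add_assoc] using hperm.sum_eq
  have hbound : ∀ v ∈ [a₁, a₂, a₃, a₄, a₅, a₆, a₇], 1 ≤ v ∧ v ≤ 7 := fun v hv => by
    have hv' := hperm.subset hv
    simp only [List.mem_cons, List.not_mem_nil, or_false] at hv'
    omega
  have hnodup := hperm.nodup_iff.mpr (by decide)
  simp only [List.mem_cons, List.not_mem_nil, or_false, forall_eq_or_imp, forall_eq] at hbound
  simp only [List.nodup_cons, List.mem_cons, List.not_mem_nil, or_false, not_or, List.nodup_nil,
    not_false_eq_true, and_true] at hnodup
  obtain ⟨h₁, h₂, h₃, ⟨h₄, h₄'⟩, h₅, ⟨h₆, h₆'⟩, h₇⟩ := hbound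
  interval_cases a₄ <;> interval_cases a₆ <;> omega

theorem stmt1 :
    ¬ ∃ a : ℕ → ℕ, Set.BijOn a (Set.Icc 1 7) (Set.Icc 1 7) ∧
      ∃ x y : ℕ, x ≠ y ∧
        a 1 + a 2 = x ∧ a 4 + a 5 + a 6 = x ∧
        a 2 + a 3 + a 4 = y ∧ a 6 + a 7 = y := by
  rintro ⟨a, ha, x, y, hxy, hx₁, hx₂, hy₁, hy₂⟩
  have hIcc : {i | i ∈ [1, 2, 3, 4, 5, 6, 7]} = Set.Icc 1 7 := by
    ext i
    simp only [Set.mem_ofPred_eq, List.mem_cons, List.not_mem_nil, or_false, Set.mem_Icc]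
    omega
  have hperm := List.map_perm_of_bijOn (by decide) (by decide) (hIcc ▸ ha)
  have := common_weight_eq_of_perm hperm (hx₁.trans hx₂.symm) (hy₁.trans hy₂.symm)
  omega
end

section
/- For every integer k ≥ 2, there exists a permutation a₁, …, a_m of {1, …, m} with m = 8k − 1 such that every position i ≡ 1 (mod 4) has weight 9k − 1 and every position i ≡ 3 (mod 4) has weight 11k − 2. -/
-- The truncated subtraction is harmless as long as `e (i - 1) + e (i + 1) ≤ W i`.
def fillOdd (e W : ℕ → ℕ) (i : ℕ) : ℕ :=
  if i % 2 = 0 then e i else W i - (e (i - 1) + e (i + 1))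

theorem seqWeight_fillOdd {m : ℕ} {e W : ℕ → ℕ} (he₀ : e 0 = 0) (he : e (m + 1) = 0)
    {i : ℕ} (hi : i % 2 = 1) (him : i ≤ m) (hle : e (i - 1) + e (i + 1) ≤ W i) :
    seqWeight m (fillOdd e W) i = W i := by
  have hprev : (if 2 ≤ i then fillOdd e W (i - 1) else 0) = e (i - 1) := by
    by_cases h : 2 ≤ i
    · rw [if_pos h, fillOdd, if_pos (by omega)]
    · obtain rfl : i = 1 := by omega
      simp [he₀]
  have hnext : (if i + 1 ≤ m then fillOdd e W (i + 1) else 0) = e (i + 1) := by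
    by_cases h : i + 1 ≤ m
    · rw [if_pos h, fillOdd, if_pos (by omega)]
    · rw [if_neg h, show i + 1 = m + 1 by omega, he]
  rw [seqWeight, hprev, hnext, fillOdd, if_neg (by omega)]
  omega

def lowEntry (k q : ℕ) : ℕ := if q ≤ k then k + q - 1 else q - k

-- The values `2k, …, 4k - 1` in increasing order, except that `3k - 1` is moved to the end
-- and `4k - 1 - ⌊k/2⌋` is moved forward to index `⌊k/2⌋`.
def highEntry (k q : ℕ) : ℕ :=
  if q < k / 2 then 2 * k + q
  else if q = k / 2 then 4 * k - 1 - k / 2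
  else if q < k then 2 * k + q - 1
  else if q + k / 2 + 1 < 2 * k then 2 * k + q
  else if q + 1 < 2 * k then 2 * k + q + 1
  else 3 * k - 1

def evenEntry (k p : ℕ) : ℕ :=
  if p % 4 = 2 then highEntry k (p / 4)
  else if p = 0 ∨ 8 * k ≤ p then 0
  else lowEntry k (p / 4)

def targetWeight (k i : ℕ) : ℕ := if i % 4 = 1 then 9 * k - 1 else 11 * k - 2

def magicSeq (k : ℕ) : ℕ → ℕ := fillOdd (evenEntry k) (targetWeight k)

-- `EntryTable k r q v`: `v` is the closed-form value at position `4q + r` of `magicSeq k`.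
def EntryTable (k : ℕ) : ℕ → ℕ → ℕ → Prop
  | 0, q, v => (q ≤ k ∧ v + 1 = k + q) ∨ (k < q ∧ v + k = q)
  | 1, q, v =>
    (q = 0 ∧ v + 1 = 7 * k) ∨
    (0 < q ∧ q < k / 2 ∧ v + 2 * q = 6 * k) ∨
    (q = k / 2 ∧ v = 4 * k + 1) ∨
    (k / 2 < q ∧ q < k ∧ v + 2 * q = 6 * k + 1) ∨
    (q = k ∧ v = 4 * k) ∨
    (k < q ∧ q + k / 2 + 1 < 2 * k ∧ v + 2 * q + 1 = 8 * k) ∨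
    (k < q ∧ 2 * k ≤ q + k / 2 + 1 ∧ q + 1 < 2 * k ∧ v + 2 * q + 2 = 8 * k) ∨
    (q + 1 = 2 * k ∧ v = 5 * k + 1)
  | 2, q, v =>
    (q < k / 2 ∧ v = 2 * k + q) ∨
    (q = k / 2 ∧ v + k / 2 + 1 = 4 * k) ∨
    (k / 2 < q ∧ q < k ∧ v + 1 = 2 * k + q) ∨
    (k ≤ q ∧ q + k / 2 + 1 < 2 * k ∧ v = 2 * k + q) ∨
    (2 * k ≤ q + k / 2 + 1 ∧ q + 1 < 2 * k ∧ v = 2 * k + q + 1) ∨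
    (2 * k ≤ q + 1 ∧ v + 1 = 3 * k)
  | 3, q, v =>
    (q < k / 2 ∧ v + 2 * q + 2 = 8 * k) ∨
    (q = k / 2 ∧ v + 1 = 6 * k) ∨
    (k / 2 < q ∧ q < k ∧ v + 2 * q + 1 = 8 * k) ∨
    (k ≤ q ∧ q + k / 2 + 1 < 2 * k ∧ v + 2 * q + 3 = 10 * k) ∨
    (2 * k ≤ q + k / 2 + 1 ∧ q + 1 < 2 * k ∧ v + 2 * q + 4 = 10 * k) ∨
    (q + 1 = 2 * k ∧ v + 1 = 8 * k)
  | _, _, _ => False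

section magicSeq

variable {k : ℕ}

theorem lowEntry_table (hk : 0 < k) (q : ℕ) : EntryTable k 0 q (lowEntry k q) := by
  unfold lowEntry
  simp only [EntryTable]
  split_ifs <;> omega

theorem highEntry_table (hk : 3 ≤ k) (q : ℕ) : EntryTable k 2 q (highEntry k q) := by
  unfold highEntry
  simp only [EntryTable]
  split_ifs <;> omega

theorem evenEntry_zero : evenEntry k 0 = 0 := by simp [evenEntry]

theorem evenEntry_eight_mul : evenEntry k (8 * k) = 0 := by
  rw [evenEntry, if_neg (by omega), if_pos (Or.inr le_rfl)]

theorem evenEntry_four_mul {q : ℕ} (hq₀ : 0 < q) (hq : q < 2 * k) :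
    evenEntry k (4 * q) = lowEntry k q := by
  rw [evenEntry, if_neg (by omega), if_neg (by omega), Nat.mul_div_cancel_left q (by norm_num)]

theorem evenEntry_four_mul_add_two (q : ℕ) : evenEntry k (4 * q + 2) = highEntry k q := by
  rw [evenEntry, if_pos (by omega), show (4 * q + 2) / 4 = q by omega]

theorem evenEntry_le (p : ℕ) : evenEntry k p ≤ 4 * k - 1 := by
  unfold evenEntry highEntry lowEntry
  split_ifs <;> omega

theorem magicSeq_of_even {p : ℕ} (hp : p % 2 = 0) : magicSeq k p = evenEntry k p := if_pos hp

theorem magicSeq_of_odd {i : ℕ} (hi : i % 2 = 1) :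
    magicSeq k i = targetWeight k i - (evenEntry k (i - 1) + evenEntry k (i + 1)) :=
  if_neg (by omega)

theorem seqWeight_magicSeq {i : ℕ} (hi : i % 2 = 1) (him : i ≤ 8 * k - 1) :
    seqWeight (8 * k - 1) (magicSeq k) i = targetWeight k i := by
  refine seqWeight_fillOdd evenEntry_zero ?_ hi him ?_
  · rw [show 8 * k - 1 + 1 = 8 * k by omega, evenEntry_eight_mul]
  · have := evenEntry_le (k := k) (i - 1)
    have := evenEntry_le (k := k) (i + 1)
    unfold targetWeight
    split_ifs <;> omega

theorem magicSeq_four_mul_add_one_table (hk : 3 ≤ k) {q : ℕ} (hq : q < 2 * k) :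
    EntryTable k 1 q (magicSeq k (4 * q + 1)) := by
  have hlow := lowEntry_table (by omega : 0 < k) q
  have hhigh := highEntry_table hk q
  rw [magicSeq_of_odd (by omega), targetWeight, if_pos (by omega), Nat.add_sub_cancel,
    evenEntry_four_mul_add_two]
  simp only [EntryTable] at hlow hhigh ⊢
  rcases Nat.eq_zero_or_pos q with rfl | hq₀
  · rw [evenEntry_zero]
    refine Or.inl ⟨rfl, ?_⟩
    rcases hhigh with hhigh | hhigh | hhigh | hhigh | hhigh | hhigh <;> omega
  · rw [evenEntry_four_mul hq₀ hq]
    rcases hlow with hlow | hlow <;>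
      rcases hhigh with hhigh | hhigh | hhigh | hhigh | hhigh | hhigh <;> omega

theorem magicSeq_four_mul_add_three_table (hk : 3 ≤ k) {q : ℕ} (hq : q < 2 * k) :
    EntryTable k 3 q (magicSeq k (4 * q + 3)) := by
  have hlow := lowEntry_table (by omega : 0 < k) (q + 1)
  have hhigh := highEntry_table hk q
  rw [magicSeq_of_odd (by omega), targetWeight, if_neg (by omega),
    show 4 * q + 3 - 1 = 4 * q + 2 by omega, show 4 * q + 3 + 1 = 4 * (q + 1) by omega,
    evenEntry_four_mul_add_two]
  simp only [EntryTable] at hlow hhigh ⊢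
  rcases Nat.lt_or_ge (q + 1) (2 * k) with hq' | hq'
  · rw [evenEntry_four_mul (by omega) hq']
    rcases hlow with hlow | hlow <;>
      rcases hhigh with hhigh | hhigh | hhigh | hhigh | hhigh | hhigh <;> omega
  · rw [show 4 * (q + 1) = 8 * k by omega, evenEntry_eight_mul]
    omega

theorem magicSeq_table (hk : 3 ≤ k) {i : ℕ} (hi : 1 ≤ i) (him : i ≤ 8 * k - 1) :
    EntryTable k (i % 4) (i / 4) (magicSeq k i) := by
  obtain ⟨q, rfl | rfl | rfl | rfl⟩ :
      ∃ q, i = 4 * q ∨ i = 4 * q + 1 ∨ i = 4 * q + 2 ∨ i = 4 * q + 3 := ⟨i / 4, by omega⟩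
  · rw [show 4 * q % 4 = 0 by omega, show 4 * q / 4 = q by omega,
      magicSeq_of_even (by omega), evenEntry_four_mul (by omega) (by omega)]
    exact lowEntry_table (by omega) q
  · rw [show (4 * q + 1) % 4 = 1 by omega, show (4 * q + 1) / 4 = q by omega]
    exact magicSeq_four_mul_add_one_table hk (by omega)
  · rw [show (4 * q + 2) % 4 = 2 by omega, show (4 * q + 2) / 4 = q by omega,
      magicSeq_of_even (by omega), evenEntry_four_mul_add_two]
    exact highEntry_table hk q
  · rw [show (4 * q + 3) % 4 = 3 by omega, show (4 * q + 3) / 4 = q by omega]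
    exact magicSeq_four_mul_add_three_table hk (by omega)

theorem magicSeq_mapsTo (hk : 3 ≤ k) :
    Set.MapsTo (magicSeq k) (Set.Icc 1 (8 * k - 1)) (Set.Icc 1 (8 * k - 1)) := by
  rintro i ⟨hi₁, hi₂⟩
  have h := magicSeq_table hk hi₁ hi₂
  obtain hr | hr | hr | hr : i % 4 = 0 ∨ i % 4 = 1 ∨ i % 4 = 2 ∨ i % 4 = 3 := by omega
  all_goals
    rw [hr] at h
    simp only [EntryTable] at h
    constructor <;> omega

theorem magicSeq_injOn (hk : 3 ≤ k) : Set.InjOn (magicSeq k) (Set.Icc 1 (8 * k - 1)) := by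
  rintro i ⟨hi₁, hi₂⟩ j ⟨hj₁, hj₂⟩ hij
  have hi := magicSeq_table hk hi₁ hi₂
  have hj := magicSeq_table hk hj₁ hj₂
  rcases (by omega : i % 4 = 0 ∨ i % 4 = 1 ∨ i % 4 = 2 ∨ i % 4 = 3) with hr | hr | hr | hr <;>
  rcases (by omega : j % 4 = 0 ∨ j % 4 = 1 ∨ j % 4 = 2 ∨ j % 4 = 3) with hs | hs | hs | hs <;>
  rw [hr] at hi <;> rw [hs] at hj <;> simp only [EntryTable] at hi hj <;> omega

theorem magicSeq_bijOn (hk : 3 ≤ k) :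
    Set.BijOn (magicSeq k) (Set.Icc 1 (8 * k - 1)) (Set.Icc 1 (8 * k - 1)) :=
  ((Set.finite_Icc _ _).injOn_iff_bijOn_of_mapsTo (magicSeq_mapsTo hk)).mp (magicSeq_injOn hk)

end magicSeq

def magicSeqTwo (i : ℕ) : ℕ := [0, 11, 6, 13, 1, 12, 4, 14, 2, 8, 7, 10, 3, 9, 5, 15].getD i 0

theorem magicSeqTwo_bijOn : Set.BijOn magicSeqTwo (Set.Icc 1 15) (Set.Icc 1 15) := by
  have hmaps : ∀ i < 16, 1 ≤ i → 1 ≤ magicSeqTwo i ∧ magicSeqTwo i ≤ 15 := by decide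
  have hinj : ∀ i < 16, ∀ j < 16, magicSeqTwo i = magicSeqTwo j → i = j := by decide
  refine ((Set.finite_Icc _ _).injOn_iff_bijOn_of_mapsTo fun i hi ↦ ?_).mp fun i hi j hj ↦ ?_
  · exact hmaps i (Nat.lt_succ_of_le hi.2) hi.1
  · exact hinj i (Nat.lt_succ_of_le hi.2) j (Nat.lt_succ_of_le hj.2)

theorem seqWeight_magicSeqTwo {i : ℕ} (hi : i % 2 = 1) (him : i ≤ 15) :
    seqWeight 15 magicSeqTwo i = targetWeight 2 i := by
  revert hi
  interval_cases i <;> decide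

theorem stmt14 :
    ∀ k : ℕ, 2 ≤ k →
    ∃ a : ℕ → ℕ, Set.BijOn a (Set.Icc 1 (8*k - 1)) (Set.Icc 1 (8*k - 1)) ∧
      (∀ i, 1 ≤ i → i ≤ 8*k - 1 → i % 4 = 1 → seqWeight (8*k - 1) a i = 9*k - 1) ∧
      (∀ i, 1 ≤ i → i ≤ 8*k - 1 → i % 4 = 3 → seqWeight (8*k - 1) a i = 11*k - 2) := by
  intro k hk
  obtain ⟨a, hbij, hweight⟩ : ∃ a : ℕ → ℕ,
      Set.BijOn a (Set.Icc 1 (8 * k - 1)) (Set.Icc 1 (8 * k - 1)) ∧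
      ∀ i, i % 2 = 1 → i ≤ 8 * k - 1 → seqWeight (8 * k - 1) a i = targetWeight k i := by
    rcases hk.eq_or_lt with rfl | hk
    · exact ⟨magicSeqTwo, magicSeqTwo_bijOn, fun i hi him ↦ seqWeight_magicSeqTwo hi him⟩
    · exact ⟨magicSeq k, magicSeq_bijOn hk, fun i hi him ↦ seqWeight_magicSeq hi him⟩
  refine ⟨a, hbij, fun i _ him hi ↦ ?_, fun i _ him hi ↦ ?_⟩
  · rw [hweight i (by omega) him, targetWeight, if_pos hi]
  · rw [hweight i (by omega) him, targetWeight, if_neg (by omega)]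
end

section
/- For every integer k ≥ 1, there exists a permutation a₁, …, a_m of {1, …, m} with m = 8k + 3 such that every position i ≡ 1 (mod 4) has weight 11k + 4 and every position i ≡ 3 (mod 4) has weight 9k + 3. -/
/-!
The entries at positions `≡ 0 (mod 4)` run down through `2k, 2k - 1, …, 1`, while every other
residue class mod 8 (except position 1, which holds `8k + 3`) carries a run of consecutive
integers going up by one per block of eight positions. Each odd position sits between a
multiple of 4 and one further entry, so over one block the decrease by 2 in the former cancels
the increase by 1 in each of the other two entries, and every weight is constant on its residue
class mod 4. The offsets of the runs are chosen so that the constants are `11k + 4` and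
`9k + 3`, also at the two ends of the sequence, and so that the runs tile `{1, …, 8k + 3}`.
-/

section seqWeight

variable {m i : ℕ} {a : ℕ → ℕ}

lemma seqWeight_one (hm : 2 ≤ m) : seqWeight m a 1 = a 1 + a 2 := by
  simp [seqWeight, hm]

lemma seqWeight_of_two_le_of_lt (hi : 2 ≤ i) (him : i < m) :
    seqWeight m a i = a (i - 1) + a i + a (i + 1) := by
  simp [seqWeight, hi, Nat.succ_le_of_lt him]

lemma seqWeight_self (hm : 2 ≤ m) : seqWeight m a m = a (m - 1) + a m := by
  simp [seqWeight, hm]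

end seqWeight

def twoWeightSeq (k i : ℕ) : ℕ :=
  if i = 1 then 8*k + 3
  else if i % 4 = 0 then 2*k + 1 - i/4
  else if i % 8 = 1 then 6*k + 2 + i/8
  else if i % 8 = 2 then 3*k + 1 + i/8
  else if i % 8 = 3 then 4*k + 2 + i/8
  else if i % 8 = 5 then 7*k + 3 + i/8
  else if i % 8 = 6 then 2*k + 1 + i/8
  else 5*k + 3 + i/8

namespace twoWeightSeq

variable {k i : ℕ}

lemma apply_one : twoWeightSeq k 1 = 8*k + 3 := by
  simp [twoWeightSeq]

lemma apply_of_mod_four_eq_zero (h : i % 4 = 0) : twoWeightSeq k i = 2*k + 1 - i/4 := by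
  unfold twoWeightSeq; split_ifs <;> omega

lemma apply_of_mod_eight_eq_one (h : i % 8 = 1) (h1 : i ≠ 1) :
    twoWeightSeq k i = 6*k + 2 + i/8 := by
  unfold twoWeightSeq; split_ifs <;> omega

lemma apply_of_mod_eight_eq_two (h : i % 8 = 2) : twoWeightSeq k i = 3*k + 1 + i/8 := by
  unfold twoWeightSeq; split_ifs <;> omega

lemma apply_of_mod_eight_eq_three (h : i % 8 = 3) : twoWeightSeq k i = 4*k + 2 + i/8 := by
  unfold twoWeightSeq; split_ifs <;> omega

lemma apply_of_mod_eight_eq_five (h : i % 8 = 5) : twoWeightSeq k i = 7*k + 3 + i/8 := by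
  unfold twoWeightSeq; split_ifs <;> omega

lemma apply_of_mod_eight_eq_six (h : i % 8 = 6) : twoWeightSeq k i = 2*k + 1 + i/8 := by
  unfold twoWeightSeq; split_ifs <;> omega

lemma apply_of_mod_eight_eq_seven (h : i % 8 = 7) : twoWeightSeq k i = 5*k + 3 + i/8 := by
  unfold twoWeightSeq; split_ifs <;> omega

lemma mapsTo : Set.MapsTo (twoWeightSeq k) (Set.Icc 1 (8*k + 3)) (Set.Icc 1 (8*k + 3)) := by
  rintro i ⟨hi1, hi2⟩
  constructor <;> unfold twoWeightSeq <;> split_ifs <;> omega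

lemma surjOn : Set.SurjOn (twoWeightSeq k) (Set.Icc 1 (8*k + 3)) (Set.Icc 1 (8*k + 3)) := by
  rintro v ⟨hv1, hv2⟩
  rcases (by omega : v = 8*k + 3 ∨ v ≤ 2*k ∨ (2*k < v ∧ v ≤ 3*k) ∨ (3*k < v ∧ v ≤ 4*k + 1) ∨
      (4*k + 1 < v ∧ v ≤ 5*k + 2) ∨ (5*k + 2 < v ∧ v ≤ 6*k + 2) ∨ (6*k + 2 < v ∧ v ≤ 7*k + 2) ∨
      (7*k + 2 < v ∧ v ≤ 8*k + 2)) with rfl | h | h | h | h | h | h | h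
  · exact ⟨1, ⟨le_rfl, by omega⟩, apply_one⟩
  · exact ⟨4 * (2*k + 1 - v), ⟨by omega, by omega⟩,
      by rw [apply_of_mod_four_eq_zero (by omega)]; omega⟩
  · exact ⟨8 * (v - (2*k + 1)) + 6, ⟨by omega, by omega⟩,
      by rw [apply_of_mod_eight_eq_six (by omega)]; omega⟩
  · exact ⟨8 * (v - (3*k + 1)) + 2, ⟨by omega, by omega⟩,
      by rw [apply_of_mod_eight_eq_two (by omega)]; omega⟩
  · exact ⟨8 * (v - (4*k + 2)) + 3, ⟨by omega, by omega⟩,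
      by rw [apply_of_mod_eight_eq_three (by omega)]; omega⟩
  · exact ⟨8 * (v - (5*k + 3)) + 7, ⟨by omega, by omega⟩,
      by rw [apply_of_mod_eight_eq_seven (by omega)]; omega⟩
  · exact ⟨8 * (v - (6*k + 2)) + 1, ⟨by omega, by omega⟩,
      by rw [apply_of_mod_eight_eq_one (by omega) (by omega)]; omega⟩
  · exact ⟨8 * (v - (7*k + 3)) + 5, ⟨by omega, by omega⟩,
      by rw [apply_of_mod_eight_eq_five (by omega)]; omega⟩

lemma bijOn : Set.BijOn (twoWeightSeq k) (Set.Icc 1 (8*k + 3)) (Set.Icc 1 (8*k + 3)) :=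
  ((Set.finite_Icc _ _).surjOn_iff_bijOn_of_mapsTo mapsTo).mp surjOn

lemma seqWeight_of_mod_four_eq_one (hi : i % 4 = 1) (him : i ≤ 8*k + 3) :
    seqWeight (8*k + 3) (twoWeightSeq k) i = 11*k + 4 := by
  rcases (by omega : i = 1 ∨ (i % 8 = 1 ∧ i ≠ 1) ∨ i % 8 = 5) with rfl | ⟨h, h1⟩ | h
  · rw [seqWeight_one (by omega), apply_one, apply_of_mod_eight_eq_two (by norm_num)]
    omega
  · rw [seqWeight_of_two_le_of_lt (by omega) (by omega),
      apply_of_mod_four_eq_zero (by omega : (i - 1) % 4 = 0), apply_of_mod_eight_eq_one h h1,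
      apply_of_mod_eight_eq_two (by omega : (i + 1) % 8 = 2)]
    omega
  · rw [seqWeight_of_two_le_of_lt (by omega) (by omega),
      apply_of_mod_four_eq_zero (by omega : (i - 1) % 4 = 0), apply_of_mod_eight_eq_five h,
      apply_of_mod_eight_eq_six (by omega : (i + 1) % 8 = 6)]
    omega

lemma seqWeight_of_mod_four_eq_three (hi : i % 4 = 3) (him : i ≤ 8*k + 3) :
    seqWeight (8*k + 3) (twoWeightSeq k) i = 9*k + 3 := by
  rcases (by omega : i = 8*k + 3 ∨ (i % 8 = 3 ∧ i < 8*k + 3) ∨ i % 8 = 7) with rfl | ⟨h, hlt⟩ | h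
  · rw [seqWeight_self (by omega), apply_of_mod_eight_eq_two (by omega : (8*k + 3 - 1) % 8 = 2),
      apply_of_mod_eight_eq_three (by omega)]
    omega
  · rw [seqWeight_of_two_le_of_lt (by omega) hlt,
      apply_of_mod_eight_eq_two (by omega : (i - 1) % 8 = 2), apply_of_mod_eight_eq_three h,
      apply_of_mod_four_eq_zero (by omega : (i + 1) % 4 = 0)]
    omega
  · rw [seqWeight_of_two_le_of_lt (by omega) (by omega),
      apply_of_mod_eight_eq_six (by omega : (i - 1) % 8 = 6), apply_of_mod_eight_eq_seven h,
      apply_of_mod_four_eq_zero (by omega : (i + 1) % 4 = 0)]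
    omega

end twoWeightSeq

theorem stmt15 :
    ∀ k : ℕ, 1 ≤ k →
    ∃ a : ℕ → ℕ, Set.BijOn a (Set.Icc 1 (8*k + 3)) (Set.Icc 1 (8*k + 3)) ∧
      (∀ i, 1 ≤ i → i ≤ 8*k + 3 → i % 4 = 1 → seqWeight (8*k + 3) a i = 11*k + 4) ∧
      (∀ i, 1 ≤ i → i ≤ 8*k + 3 → i % 4 = 3 → seqWeight (8*k + 3) a i = 9*k + 3) :=
  fun k _ => ⟨twoWeightSeq k, twoWeightSeq.bijOn,
    fun _ _ hi h => twoWeightSeq.seqWeight_of_mod_four_eq_one h hi,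
    fun _ _ hi h => twoWeightSeq.seqWeight_of_mod_four_eq_three h hi⟩
end

section
/- For every integer j ≥ 1, there exists a permutation a₁, …, a_m of {1, …, m} with m = 8j + 4 such that every position i ≡ 1 (mod 4) has weight 11j + 6 and every position i ≡ 3 (mod 4) has weight 9j + 6. -/
def middleValue (j q : ℕ) : ℕ :=
  if q ≤ j then 3 * j + 2 + q else j + 1 + q

def constWeightSeq (j i : ℕ) : ℕ :=
  if i % 4 = 0 then i / 4
  else if i % 4 = 1 then 11 * j + 6 - i / 4 - middleValue j (i / 4)
  else if i % 4 = 2 then middleValue j (i / 4)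
  else 9 * j + 5 - i / 4 - middleValue j (i / 4)

theorem seqWeight_eq_of_apply_zero {m i : ℕ} {a : ℕ → ℕ} (ha : a 0 = 0) (hi : 1 ≤ i)
    (him : i < m) : seqWeight m a i = a (i - 1) + a i + a (i + 1) := by
  unfold seqWeight
  rcases Nat.lt_or_ge i 2 with h | h
  · obtain rfl : i = 1 := by omega
    simp [ha, him]
  · simp [h, Nat.succ_le_of_lt him]

namespace constWeightSeq

variable (j q : ℕ)

theorem apply_zero : constWeightSeq j 0 = 0 := rfl

theorem apply_four_mul : constWeightSeq j (4 * q) = q := by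
  simp [constWeightSeq]

theorem apply_four_mul_add_one :
    constWeightSeq j (4 * q + 1) = 11 * j + 6 - q - middleValue j q := by
  simp [constWeightSeq, show (4 * q + 1) / 4 = q by omega, show (4 * q + 1) % 4 = 1 by omega]

theorem apply_four_mul_add_two : constWeightSeq j (4 * q + 2) = middleValue j q := by
  simp [constWeightSeq, show (4 * q + 2) / 4 = q by omega, show (4 * q + 2) % 4 = 2 by omega]

theorem apply_four_mul_add_three :
    constWeightSeq j (4 * q + 3) = 9 * j + 5 - q - middleValue j q := by
  simp [constWeightSeq, show (4 * q + 3) / 4 = q by omega, show (4 * q + 3) % 4 = 3 by omega]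

theorem bijOn : Set.BijOn (constWeightSeq j) (Set.Icc 1 (8 * j + 4)) (Set.Icc 1 (8 * j + 4)) := by
  have hmaps : Set.MapsTo (constWeightSeq j) (Set.Icc 1 (8 * j + 4)) (Set.Icc 1 (8 * j + 4)) := by
    intro i hi
    simp only [Set.mem_Icc] at hi ⊢
    unfold constWeightSeq middleValue
    split_ifs <;> omega
  have hinj : Set.InjOn (constWeightSeq j) (Set.Icc 1 (8 * j + 4)) := by
    intro i₁ h₁ i₂ h₂ heq
    simp only [Set.mem_Icc] at h₁ h₂
    unfold constWeightSeq middleValue at heq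
    split_ifs at heq <;> omega
  exact ((Set.finite_Icc _ _).injOn_iff_bijOn_of_mapsTo hmaps).mp hinj

theorem seqWeight_of_mod_four_eq_one {i : ℕ} (hi : i % 4 = 1) (him : i ≤ 8 * j + 4) :
    seqWeight (8 * j + 4) (constWeightSeq j) i = 11 * j + 6 := by
  obtain ⟨q, rfl⟩ : ∃ q, i = 4 * q + 1 := ⟨i / 4, by omega⟩
  rw [seqWeight_eq_of_apply_zero (apply_zero j) (by omega) (by omega), Nat.add_sub_cancel,
    apply_four_mul, apply_four_mul_add_one, show 4 * q + 1 + 1 = 4 * q + 2 by rfl,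
    apply_four_mul_add_two]
  unfold middleValue
  split_ifs <;> omega

theorem seqWeight_of_mod_four_eq_three {i : ℕ} (hi : i % 4 = 3) (him : i ≤ 8 * j + 4) :
    seqWeight (8 * j + 4) (constWeightSeq j) i = 9 * j + 6 := by
  obtain ⟨q, rfl⟩ : ∃ q, i = 4 * q + 3 := ⟨i / 4, by omega⟩
  rw [seqWeight_eq_of_apply_zero (apply_zero j) (by omega) (by omega),
    show 4 * q + 3 - 1 = 4 * q + 2 by omega, show 4 * q + 3 + 1 = 4 * (q + 1) by omega,
    apply_four_mul, apply_four_mul_add_two, apply_four_mul_add_three]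
  unfold middleValue
  split_ifs <;> omega

end constWeightSeq

theorem stmt19 :
    ∀ j : ℕ, 1 ≤ j →
    ∃ a : ℕ → ℕ, Set.BijOn a (Set.Icc 1 (8*j + 4)) (Set.Icc 1 (8*j + 4)) ∧
      (∀ i, 1 ≤ i → i ≤ 8*j + 4 → i % 4 = 1 → seqWeight (8*j + 4) a i = 11*j + 6) ∧
      (∀ i, 1 ≤ i → i ≤ 8*j + 4 → i % 4 = 3 → seqWeight (8*j + 4) a i = 9*j + 6) := by
  intro j _
  exact ⟨constWeightSeq j, constWeightSeq.bijOn j,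
    fun _ _ him hi => constWeightSeq.seqWeight_of_mod_four_eq_one j hi him,
    fun _ _ him hi => constWeightSeq.seqWeight_of_mod_four_eq_three j hi him⟩
end
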